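/- arXiv:math/9811094 — 4 statements merged into one kernel-verified Lean document; each statement's English description precedes it below -/
import Mathlib

section
/- For every continuous function g : Ω̃_A → ℤ there exist f ∈ ⊕_{x∈𝒢} C(Δ_x; ℤ) and h ∈ ℜ such that g = L_α f + h as functions on Ω̃_A. (That is, every element of C(Ω̃_A; ℤ) is congruent, modulo the image of L_α, to an element of the ring ℜ generated by 1 and the characteristic functions of the Δ_i and Δ_{i⁻¹}.) -/
/-!
Since `Ω̃_A` is a closed subset of the Cantor space `{0,1}^𝔽`, a continuous `g : Ω̃_A → ℤ` depends
on finitely many coordinates, so it is a `ℤ`-combination of cylinder functions `1_{⋂_{t∈S} Δ_t}`,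
`S ⊆ 𝔽` finite. Each of these is shown to be congruent to an element of `ℜ` modulo the image of
`L_α` by induction on a weight of `S`. The relations defining `Ω_A^τ` hold on all of `Ω̃_A` and
kill or shorten most words: a word containing `x⁻¹y` never lies in `ξ`, `vx⁻¹z⁻¹ ∈ ξ` iff
`A(z,x) = 1` and `vx⁻¹ ∈ ξ`, words beginning with different generators never lie in `ξ`
together, and `x⁻¹ ∈ ξ ↔ A(x,y) = 1` once `y ∈ ξ`. What survives is either a product of the
`1_{Δ_{x⁻¹}}`, which lies in `ℜ`, or a cylinder whose words all start with the same letter `y`.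
In the latter case `L_α` of the cylinder function placed in the `y`-th summand is `1_S - 1_{S'}`
with `S' = {y⁻¹} ∪ y⁻¹S`, and `S'` has smaller weight.
-/

open OnePoint

noncomputable section

namespace CKO

variable {G : Type*}

/-- The submonoid `𝔽⁺` of the free group generated by the generators. -/
def pos (G : Type*) : Submonoid (FreeGroup G) :=
  Submonoid.closure (Set.range (FreeGroup.of : G → FreeGroup G))

/-- The defining relations of `Ω_A^τ` for a subset `ξ ⊆ 𝔽`, identified with a point of
`{0,1}^𝔽`: (a) `e ∈ ξ` and `ξ` contains every initial subword (prefix of the reduced word) of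
each of its elements; (b) each `ω ∈ ξ` has at most one `y ∈ G` with `ωy ∈ ξ`; (c) if
`ω, ωy ∈ ξ` then `ωx⁻¹ ∈ ξ ↔ A(x,y) = 1`. -/
def IsCK [DecidableEq G] (A : G → G → Bool) (ξ : FreeGroup G → Bool) : Prop :=
  ξ 1 = true ∧
  (∀ ω : FreeGroup G, ξ ω = true → ∀ p : List (G × Bool), p <+: ω.toWord →
    ξ (FreeGroup.mk p) = true) ∧
  (∀ ω : FreeGroup G, ξ ω = true → ∀ y z : G,
    ξ (ω * FreeGroup.of y) = true → ξ (ω * FreeGroup.of z) = true → y = z) ∧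
  (∀ ω : FreeGroup G, ξ ω = true → ∀ y : G, ξ (ω * FreeGroup.of y) = true →
    ∀ x : G, (ξ (ω * (FreeGroup.of x)⁻¹) = true ↔ A x y = true))

/-- `ξ` is unbounded: it has no upper bound in `𝔽` for the left order `s ≤ t ↔ s⁻¹t ∈ 𝔽⁺`. -/
def Unbounded (ξ : FreeGroup G → Bool) : Prop :=
  ¬ ∃ t : FreeGroup G, ∀ s : FreeGroup G, ξ s = true → s⁻¹ * t ∈ pos G

/-- `Ω̃_A`: the closure in `{0,1}^𝔽` of the set of unbounded elements of `Ω_A^τ`. -/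
def OmegaT [DecidableEq G] (A : G → G → Bool) : Set (FreeGroup G → Bool) :=
  closure {ξ | IsCK A ξ ∧ Unbounded ξ}

end CKO

namespace CKO

variable {G : Type*} [DecidableEq G]

/-- Membership in `⊕_{x∈G} C(Δ_x; ℤ)`: finitely many nonzero components, each vanishing
outside `Δ_x` and restricting to a continuous function on `Ω̃_A`. -/
def MemDirectSum (A : G → G → Bool) (f : G → (FreeGroup G → Bool) → ℤ) : Prop :=
  {x : G | f x ≠ 0}.Finite ∧
  (∀ (x : G) (ξ : FreeGroup G → Bool),
    (ξ ∉ OmegaT A ∨ ξ (FreeGroup.of x) ≠ true) → f x ξ = 0) ∧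
  (∀ x : G, Continuous fun ξ : OmegaT A => f x (ξ : FreeGroup G → Bool))

/-- The map `L_α`: `(L_α f)(ξ) = Σ_x f_x(ξ) − Σ_{x : x⁻¹ ∈ ξ} f_x(xξ)`. -/
def Lalpha (f : G → (FreeGroup G → Bool) → ℤ) (ξ : FreeGroup G → Bool) : ℤ :=
  (∑ᶠ x : G, f x ξ) -
    ∑ᶠ x : G, if ξ ((FreeGroup.of x)⁻¹) = true
      then f x fun ω => ξ ((FreeGroup.of x)⁻¹ * ω) else 0

/-- The ring `ℜ` of functions on `Ω̃_A` generated by `1` and the characteristic functions of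
the `Δ_i` and `Δ_{i⁻¹}`. -/
def frakR (A : G → G → Bool) : Subring (OmegaT A → ℤ) :=
  Subring.closure
    ((Set.range fun i : G => fun ξ : OmegaT A =>
        if (ξ : FreeGroup G → Bool) (FreeGroup.of i) = true then (1 : ℤ) else 0) ∪
     (Set.range fun i : G => fun ξ : OmegaT A =>
        if (ξ : FreeGroup G → Bool) ((FreeGroup.of i)⁻¹) = true then (1 : ℤ) else 0))

end CKO

section Cylinder

variable {I : Type*}

def cyl (S : Finset I) (ξ : I → Bool) : ℤ := if ∀ i ∈ S, ξ i = true then 1 else 0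

theorem cyl_union [DecidableEq I] (S T : Finset I) (ξ : I → Bool) :
    cyl (S ∪ T) ξ = cyl S ξ * cyl T ξ := by
  simp only [cyl, Finset.forall_mem_union, ite_zero_mul_ite_zero, one_mul]

theorem cyl_insert [DecidableEq I] (i : I) (S : Finset I) (ξ : I → Bool) :
    cyl (insert i S) ξ = if ξ i = true then cyl S ξ else 0 := by
  simp only [cyl, Finset.forall_mem_insert, ite_and]

theorem cyl_eq_ite_of_mem [DecidableEq I] {S : Finset I} {i : I} (hi : i ∈ S) (ξ : I → Bool) :
    cyl S ξ = if ξ i = true then cyl (S.erase i) ξ else 0 := by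
  rw [← cyl_insert, Finset.insert_erase hi]

theorem continuous_cyl (S : Finset I) : Continuous (cyl S) := by
  have : cyl S = (fun v : S → Bool => if ∀ i, v i = true then (1 : ℤ) else 0) ∘
      fun ξ i => ξ i.1 := by
    funext ξ; simp [cyl]
  rw [this]
  exact continuous_of_discreteTopology.comp (continuous_pi fun i => continuous_apply _)

theorem IsCompact.exists_finset_forall_eq_of_continuous {β : Type*} [TopologicalSpace β]
    [DiscreteTopology β] {X : Set (I → Bool)} (hX : IsCompact X) (g : C(X, β)) :
    ∃ F : Finset I, ∀ ξ ξ' : X, (∀ i ∈ F, ξ.1 i = ξ'.1 i) → g ξ = g ξ' := by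
  classical
  have coord_nhds (ξ : X) (i : I) : ∀ᶠ ζ in nhds ξ, ζ.1 i = ξ.1 i :=
    ((continuous_apply i).comp continuous_subtype_val).continuousAt.preimage_mem_nhds
      ((isOpen_discrete {ξ.1 i}).mem_nhds rfl)
  have hloc (ξ : X) : ∃ F : Finset I, ∀ ξ' : X, (∀ i ∈ F, ξ'.1 i = ξ.1 i) → g ξ' = g ξ := by
    obtain ⟨u, hu, hug⟩ := mem_nhds_subtype X ξ _ |>.mp <|
      g.continuous.continuousAt.preimage_mem_nhds ((isOpen_discrete {g ξ}).mem_nhds rfl)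
    rw [nhds_pi, Filter.mem_pi] at hu
    obtain ⟨J, hJ, t, ht, hJt⟩ := hu
    refine ⟨hJ.toFinset, fun ξ' hξ' => hug (hJt fun i hi => ?_)⟩
    rw [hξ' i (hJ.mem_toFinset.mpr hi)]
    exact mem_of_mem_nhds (ht i)
  choose F hF using hloc
  have : CompactSpace X := isCompact_iff_compactSpace.mp hX
  obtain ⟨s, -, hs⟩ := isCompact_univ.elim_nhds_subcover
    (fun ζ => {ξ : X | ∀ i ∈ F ζ, ξ.1 i = ζ.1 i})
    (fun ζ _ => (Filter.eventually_all_finset _).mpr fun i _ => coord_nhds ζ i)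
  refine ⟨s.biUnion F, fun ξ ξ' hξξ' => ?_⟩
  obtain ⟨ζ, hζ, hξζ⟩ := Set.mem_iUnion₂.mp (hs (Set.mem_univ ξ))
  have hξ'ζ : ∀ i ∈ F ζ, ξ'.1 i = ζ.1 i := fun i hi =>
    (hξξ' i (Finset.mem_biUnion.mpr ⟨ζ, hζ, hi⟩)).symm.trans (hξζ i hi)
  rw [hF ζ ξ hξζ, hF ζ ξ' hξ'ζ]

variable {X : Set (I → Bool)}

theorem mem_subring_closure_cyl_singleton {F : Finset I} {g : X → ℤ}
    (hF : ∀ ξ ξ' : X, (∀ i ∈ F, ξ.1 i = ξ'.1 i) → g ξ = g ξ') :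
    g ∈ Subring.closure (Set.range fun i (ξ : X) => cyl {i} ξ.1) := by
  classical
  let p : X → Finset I := fun ξ => F.filter (ξ.1 · = true)
  have hfac : Function.FactorsThrough g p := fun ξ ξ' h => hF ξ ξ' fun i hi => by
    have := Finset.ext_iff.mp h i
    simp only [p, Finset.mem_filter, hi, true_and] at this
    exact Bool.eq_iff_iff.mpr this
  let φ : Finset I → I → X → ℤ := fun S i ξ => if (ξ.1 i = true ↔ i ∈ S) then 1 else 0
  have hrepr : g = ∑ S ∈ F.powerset, Function.extend p g 0 S • ∏ i ∈ F, φ S i := by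
    funext ξ
    have hatom (S : Finset I) (hS : S ⊆ F) : (∀ i ∈ F, (ξ.1 i = true ↔ i ∈ S)) ↔ p ξ = S := by
      rw [Finset.ext_iff]
      refine ⟨fun h i => ?_, fun h i hi => ?_⟩
      · simp only [p, Finset.mem_filter]
        exact ⟨fun ⟨hi, hξ⟩ => (h i hi).mp hξ, fun hi => ⟨hS hi, (h i (hS hi)).mpr hi⟩⟩
      · simpa [p, hi] using h i
    simp only [Finset.sum_apply, Pi.smul_apply, Finset.prod_apply, φ, Finset.prod_boole,
      smul_eq_mul, mul_ite, mul_one, mul_zero]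
    rw [Finset.sum_congr rfl fun S hS => by
      rw [if_congr (hatom S (Finset.mem_powerset.mp hS)) rfl rfl], Finset.sum_ite_eq]
    simp [hfac.extend_apply, p]
  rw [hrepr]
  refine Subring.sum_mem _ fun S _ => Subring.zsmul_mem _ (Subring.prod_mem _ fun i _ => ?_) _
  have hχ : (fun ξ : X => cyl {i} ξ.1) ∈ Subring.closure (Set.range fun i (ξ : X) => cyl {i} ξ.1) :=
    Subring.subset_closure ⟨i, rfl⟩
  by_cases hi : i ∈ S
  · convert hχ using 1; funext ξ; simp [φ, cyl, hi]
  · convert Subring.sub_mem _ (Subring.one_mem _) hχ using 1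
    funext ξ; cases hξ : ξ.1 i <;> simp [φ, cyl, hi, hξ]

theorem mem_closure_range_cyl {F : Finset I} {g : X → ℤ}
    (hF : ∀ ξ ξ' : X, (∀ i ∈ F, ξ.1 i = ξ'.1 i) → g ξ = g ξ') :
    g ∈ AddSubgroup.closure (Set.range fun S (ξ : X) => cyl S ξ.1) := by
  classical
  refine AddSubgroup.closure_mono ?_
    (Subring.mem_closure_iff.mp (mem_subring_closure_cyl_singleton hF))
  intro f hf
  induction hf using Submonoid.closure_induction with
  | mem f hf => obtain ⟨i, rfl⟩ := hf; exact ⟨{i}, rfl⟩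
  | one => exact ⟨∅, funext fun ξ => by simp [cyl]⟩
  | mul f f' _ _ hf hf' =>
    obtain ⟨S, rfl⟩ := hf
    obtain ⟨T, rfl⟩ := hf'
    exact ⟨S ∪ T, funext fun ξ => cyl_union S T ξ⟩

end Cylinder

theorem word_shape_cases {α : Type*} : ∀ w : List (α × Bool),
    w = [] ∨ (∃ x, w = [(x, false)]) ∨ (∃ y q, w = (y, true) :: q) ∨
      (∃ v x z r, w = v ++ (x, false) :: (z, true) :: r) ∨
      ∃ v x z, w = v ++ [(x, false), (z, false)]
  | [] => .inl rfl
  | (y, true) :: q => .inr (.inr (.inl ⟨y, q, rfl⟩))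
  | (x, false) :: w => by
    rcases word_shape_cases w with rfl | ⟨z, rfl⟩ | ⟨z, r, rfl⟩ | ⟨v, x', z, r, rfl⟩ |
      ⟨v, x', z, rfl⟩
    · exact .inr (.inl ⟨x, rfl⟩)
    · exact .inr (.inr (.inr (.inr ⟨[], x, z, rfl⟩)))
    · exact .inr (.inr (.inr (.inl ⟨[], x, z, r, rfl⟩)))
    · exact .inr (.inr (.inr (.inl ⟨(x, false) :: v, x', z, r, rfl⟩)))
    · exact .inr (.inr (.inr (.inr ⟨(x, false) :: v, x', z, rfl⟩)))

namespace FreeGroup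

variable {α : Type*}

theorem mk_append_inv_mul_of (u : List (α × Bool)) (x : α) :
    mk (u ++ [(x, false)]) * of x = mk u := by
  rw [← mul_mk, show mk [(x, false)] = (of x)⁻¹ from rfl, inv_mul_cancel_right]

variable [DecidableEq α]

theorem toWord_mk_of_isInfix {t : FreeGroup α} {v : List (α × Bool)} (h : v <:+: t.toWord) :
    (mk v).toWord = v := by
  rw [toWord_mk, (isReduced_toWord.infix h).reduce_eq]

theorem toWord_of_inv_mul (y : α) (ω : FreeGroup α) :
    ((of y)⁻¹ * ω).toWord =
      if ω.toWord.head? = Option.some (y, true) then ω.toWord.tail else (y, false) :: ω.toWord := by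
  rw [toWord_mul, show (of y)⁻¹.toWord = [(y, false)] from rfl, List.singleton_append,
    reduce.cons, reduce_toWord]
  rcases ω.toWord with _ | ⟨⟨z, b⟩, w⟩
  · rfl
  · cases b <;> by_cases hz : y = z <;> simp [hz, eq_comm]

end FreeGroup

namespace CKO

open FreeGroup

section

variable {G : Type*}

/-- The point `sξ = {sω | ω ∈ ξ}` of the paper, in indicator form. -/
def translate (s : FreeGroup G) (ξ : FreeGroup G → Bool) : FreeGroup G → Bool :=
  fun ω => ξ (s⁻¹ * ω)

theorem Unbounded.translate {ξ : FreeGroup G → Bool} (hξ : Unbounded ξ) (s : FreeGroup G) :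
    Unbounded (translate s ξ) := by
  rintro ⟨t, ht⟩
  refine hξ ⟨s⁻¹ * t, fun u hu => ?_⟩
  have := ht (s * u) (by simpa [CKO.translate] using hu)
  rwa [mul_inv_rev, mul_assoc] at this

theorem lalpha_add {f f' : G → (FreeGroup G → Bool) → ℤ} (hf : {x | f x ≠ 0}.Finite)
    (hf' : {x | f' x ≠ 0}.Finite) (ξ : FreeGroup G → Bool) :
    Lalpha (f + f') ξ = Lalpha f ξ + Lalpha f' ξ := by
  have hfin {f : G → (FreeGroup G → Bool) → ℤ} (hf : {x | f x ≠ 0}.Finite) {u : G → ℤ}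
      (hu : ∀ x, f x = 0 → u x = 0) : (Function.support u).Finite :=
    hf.subset fun x hx h => hx (hu x h)
  simp only [Lalpha, Pi.add_apply, ite_add_zero]
  rw [finsum_add_distrib (hfin hf ?_) (hfin hf' ?_),
    finsum_add_distrib (hfin hf ?_) (hfin hf' ?_)]
  · ring
  all_goals intro x h; simp [h]

end

variable {G : Type*} [DecidableEq G] {A : G → G → Bool} {ξ : FreeGroup G → Bool}

namespace IsCK

theorem apply_mk_of_isPrefix (hξ : IsCK A ξ) {t : FreeGroup G} (ht : ξ t = true)
    {p : List (G × Bool)} (hp : p <+: t.toWord) : ξ (mk p) = true :=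
  hξ.2.1 t ht p hp

theorem apply_of_of_toWord_eq_cons (hξ : IsCK A ξ) {t : FreeGroup G} (ht : ξ t = true) {y : G}
    {q : List (G × Bool)} (hw : t.toWord = (y, true) :: q) : ξ (of y) = true :=
  hξ.apply_mk_of_isPrefix ht (p := [(y, true)]) (hw ▸ ⟨q, rfl⟩)

theorem eq_of_apply_of (hξ : IsCK A ξ) {y z : G} (hy : ξ (of y) = true)
    (hz : ξ (of z) = true) : y = z :=
  hξ.2.2.1 1 hξ.1 y z (by rwa [one_mul]) (by rwa [one_mul])

theorem apply_of_inv (hξ : IsCK A ξ) {x y : G} (hy : ξ (of y) = true) :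
    ξ (of x)⁻¹ = A x y := by
  have h := hξ.2.2.2 1 hξ.1 y (by rwa [one_mul]) x
  rw [one_mul] at h
  exact Bool.eq_iff_iff.mpr h

theorem apply_eq_false_of_toWord_eq_append_inv_of (hξ : IsCK A ξ) {t : FreeGroup G}
    {v r : List (G × Bool)} {x z : G} (hw : t.toWord = v ++ (x, false) :: (z, true) :: r) :
    ξ t = false := by
  refine Bool.eq_false_iff.mpr fun ht => ?_
  have hpre (p : List (G × Bool)) (hp : p <+: t.toWord) := hξ.apply_mk_of_isPrefix ht hp
  -- both `x` and `z` continue `v x⁻¹` inside `ξ`, so `x = z`, contradicting reducedness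
  have hxz : x = z := hξ.2.2.1 (mk (v ++ [(x, false)])) (hpre _ (by rw [hw]; simp))
    x z (by rw [mk_append_inv_mul_of]; exact hpre _ (by rw [hw]; simp))
    (by rw [← mk_toWord (x := of z), toWord_of, mul_mk]; exact hpre _ (by rw [hw]; simp))
  subst hxz
  have := isReduced_toWord.infix
    (show [(x, false), (x, true)] <:+: t.toWord from ⟨v, r, by simp [hw]⟩)
  simp [FreeGroup.IsReduced] at this

theorem apply_of_toWord_eq_append_inv_inv (hξ : IsCK A ξ) {t : FreeGroup G}
    {v : List (G × Bool)} {x z : G} (hw : t.toWord = v ++ [(x, false), (z, false)]) :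
    ξ t = (A z x && ξ (mk (v ++ [(x, false)]))) := by
  have hω : t = mk (v ++ [(x, false)]) * (of z)⁻¹ := by
    rw [show (of z)⁻¹ = mk [(z, false)] from rfl, mul_mk, List.append_assoc,
      List.singleton_append, ← hw, mk_toWord]
  cases hξω : ξ (mk (v ++ [(x, false)]))
  · rw [Bool.and_false, ← Bool.not_eq_true]
    intro ht
    have := hξ.apply_mk_of_isPrefix ht (p := v ++ [(x, false)]) (by rw [hw]; simp)
    simp_all
  · have hv : ξ (mk (v ++ [(x, false)]) * of x) = true := by
      rw [mk_append_inv_mul_of]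
      exact hξ.apply_mk_of_isPrefix hξω (by
        rw [toWord_mk_of_isInfix (t := t) ⟨[], [(z, false)], by simp [hw]⟩]
        exact List.prefix_append _ _)
    rw [Bool.and_true, hω]
    exact Bool.eq_iff_iff.mpr (hξ.2.2.2 _ hξω x hv z)

theorem translate (hξ : IsCK A ξ) {y : G} (hy : ξ (of y)⁻¹ = true) :
    IsCK A (translate (of y) ξ) := by
  refine ⟨by simpa [CKO.translate] using hy, fun ω hω p hp => ?_, fun ω hω a b ha hb => ?_,
    fun ω hω a ha x => ?_⟩
  · have hw := toWord_of_inv_mul y ω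
    split_ifs at hw with hhead
    · obtain ⟨q, hq⟩ : ∃ q, ω.toWord = (y, true) :: q := by
        rcases h : ω.toWord with _ | ⟨a, q⟩ <;> simp_all
      rcases p with _ | ⟨a, p⟩
      · simpa [CKO.translate, ← one_eq_mk] using hy
      · rw [hq] at hp
        obtain ⟨rfl, hp⟩ := List.cons_prefix_cons.mp hp
        have : (of y)⁻¹ * mk ((y, true) :: p) = mk p := by
          rw [← List.singleton_append, ← mul_mk, show mk [(y, true)] = of y from rfl,
            inv_mul_cancel_left]
        simp only [CKO.translate, this]
        exact hξ.apply_mk_of_isPrefix hω (by rwa [hw, hq])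
    · have : (of y)⁻¹ * mk p = mk ((y, false) :: p) := by
        rw [show (of y)⁻¹ = mk [(y, false)] from rfl, mul_mk, List.singleton_append]
      simp only [CKO.translate, this]
      exact hξ.apply_mk_of_isPrefix hω (by rw [hw]; exact List.cons_prefix_cons.mpr ⟨rfl, hp⟩)
  · simp only [CKO.translate, ← mul_assoc] at *
    exact hξ.2.2.1 _ hω a b ha hb
  · simp only [CKO.translate, ← mul_assoc] at *
    exact hξ.2.2.2 _ hω a ha x

end IsCK

theorem isClosed_setOf_isCK (A : G → G → Bool) :
    IsClosed {ξ : FreeGroup G → Bool | IsCK A ξ} := by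
  have hopen (ω : FreeGroup G) : IsOpen {ξ : FreeGroup G → Bool | ξ ω = true} :=
    (continuous_apply (A := fun _ => Bool) ω).isOpen_preimage {true} (isOpen_discrete _)
  have hclosed (ω : FreeGroup G) (b : Bool) : IsClosed {ξ : FreeGroup G → Bool | ξ ω = b} :=
    isClosed_eq (continuous_apply ω) continuous_const
  simp only [IsCK, Set.ofPred_and, Set.ofPred_forall, imp_forall_iff, Bool.coe_iff_coe]
  repeat' first
    | apply IsClosed.inter
    | apply isClosed_iInter; intro _
    | apply isClosed_imp
    | exact hopen _
    | exact hclosed _ _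
    | exact isOpen_const
    | exact isClosed_const

theorem isCK_of_mem_omegaT (hξ : ξ ∈ OmegaT A) : IsCK A ξ :=
  closure_minimal (fun _ h => h.1) (isClosed_setOf_isCK A) hξ

theorem translate_mem_omegaT (hξ : ξ ∈ OmegaT A) {y : G} (hy : ξ (of y)⁻¹ = true) :
    translate (of y) ξ ∈ OmegaT A := by
  have hopen : IsOpen {ζ : FreeGroup G → Bool | ζ (of y)⁻¹ = true} :=
    (continuous_apply (A := fun _ => Bool) _).isOpen_preimage {true} (isOpen_discrete _)
  have hmaps : Set.MapsTo (translate (of y))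
      ({ζ | ζ (of y)⁻¹ = true} ∩ {ζ | IsCK A ζ ∧ Unbounded ζ}) {ζ | IsCK A ζ ∧ Unbounded ζ} :=
    fun ζ ⟨hζy, hζ, hζb⟩ => ⟨hζ.translate hζy, hζb.translate _⟩
  exact hmaps.closure (continuous_pi fun _ => continuous_apply _) (hopen.inter_closure ⟨hy, hξ⟩)

def directSum (A : G → G → Bool) : AddSubgroup (G → (FreeGroup G → Bool) → ℤ) where
  carrier := {f | MemDirectSum A f}
  add_mem' {f f'} hf hf' := by
    refine ⟨(hf.1.union hf'.1).subset fun x hx => ?_, fun x ξ h => ?_,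
      fun x => (hf.2.2 x).add (hf'.2.2 x)⟩
    · by_contra h
      simp_all
    · simp [hf.2.1 x ξ h, hf'.2.1 x ξ h]
  zero_mem' := ⟨by simp, fun _ _ _ => rfl, fun _ => continuous_const⟩
  neg_mem' {f} hf := ⟨by simpa using hf.1, fun x ξ h => by simp [hf.2.1 x ξ h],
    fun x => (hf.2.2 x).neg⟩

def lalphaHom (A : G → G → Bool) : directSum A →+ (OmegaT A → ℤ) :=
  AddMonoidHom.mk' (fun f ξ => Lalpha f.1 ξ) fun f f' => funext fun ξ => lalpha_add f.2.1 f'.2.1 ξ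

def lalphaRangeSupFrakR (A : G → G → Bool) : AddSubgroup (OmegaT A → ℤ) :=
  (lalphaHom A).range ⊔ (frakR A).toAddSubgroup

open Classical in
def single (A : G → G → Bool) (y : G) (φ : (FreeGroup G → Bool) → ℤ) :
    G → (FreeGroup G → Bool) → ℤ :=
  fun x ξ => if x = y ∧ ξ ∈ OmegaT A ∧ ξ (of y) = true then φ ξ else 0

theorem single_mem_directSum (y : G) {φ : (FreeGroup G → Bool) → ℤ}
    (hφ : Continuous fun ξ : OmegaT A => φ ξ) : single A y φ ∈ directSum A := by
  refine ⟨(Set.finite_singleton y).subset fun x hx => ?_, fun x ξ h => ?_, fun x => ?_⟩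
  · by_contra hxy
    exact hx (funext fun ξ => if_neg fun h => hxy h.1)
  · exact if_neg fun ⟨hxy, hm, hy⟩ => h.elim (· hm) fun h' => h' (hxy ▸ hy)
  · by_cases hxy : x = y
    · subst hxy
      have : (fun ξ : OmegaT A => single A x φ x ξ) =
          (fun p : Bool × ℤ => if p.1 = true then p.2 else 0) ∘
          fun ξ : OmegaT A => (ξ.1 (of x), φ ξ) := by
        funext ξ
        simp [single, ξ.2]
      rw [this]
      exact continuous_of_discreteTopology.comp
        (((continuous_apply _).comp continuous_subtype_val).prodMk hφ)
    · simp only [single, hxy, false_and, if_false]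
      exact continuous_const

theorem lalpha_single (y : G) (φ : (FreeGroup G → Bool) → ℤ) (hξ : ξ ∈ OmegaT A) :
    Lalpha (single A y φ) ξ = (if ξ (of y) = true then φ ξ else 0) -
      if ξ (of y)⁻¹ = true then φ (translate (of y) ξ) else 0 := by
  have hzero (x : G) (hx : x ≠ y) (ζ) : single A y φ x ζ = 0 := if_neg fun h => hx h.1
  rw [Lalpha, finsum_eq_single _ y fun x hx => hzero x hx ξ,
    finsum_eq_single _ y fun x hx => by simp [hzero x hx]]
  congr 1
  · simp [single, hξ]
  · split_ifs with hy
    · have hT := translate_mem_omegaT hξ hy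
      have hTy : translate (of y) ξ (of y) = true := by
        simpa [CKO.translate] using (isCK_of_mem_omegaT hξ).1
      exact if_pos ⟨rfl, hT, hTy⟩
    · rfl

def cylOn (A : G → G → Bool) (S : Finset (FreeGroup G)) : OmegaT A → ℤ := fun ξ => cyl S ξ.1

/-- Letters count once and positive letters three times, so that stripping a common first letter
`y` from every word of a cylinder (`-3` each) pays for the extra word `y⁻¹` (weight `2`). -/
def weight (t : FreeGroup G) : ℕ := t.toWord.length + 2 * t.toWord.countP (·.2) + 1

def totalWeight (S : Finset (FreeGroup G)) : ℕ := ∑ t ∈ S, weight t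

theorem weight_mk_lt {t : FreeGroup G} {v : List (G × Bool)} {x z : G}
    (hw : t.toWord = v ++ [(x, false), (z, false)]) :
    weight (mk (v ++ [(x, false)])) < weight t := by
  rw [weight, weight, toWord_mk_of_isInfix (t := t) ⟨[], [(z, false)], by simp [hw]⟩, hw]
  simp

theorem weight_of_inv_mul {t : FreeGroup G} {y : G} {q : List (G × Bool)}
    (hw : t.toWord = (y, true) :: q) : weight ((of y)⁻¹ * t) + 3 = weight t := by
  rw [weight, weight, toWord_of_inv_mul, hw]
  simp
  omega

theorem totalWeight_erase_lt {S : Finset (FreeGroup G)} {t : FreeGroup G} (ht : t ∈ S) :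
    totalWeight (S.erase t) < totalWeight S :=
  Finset.sum_erase_lt_of_pos ht (Nat.succ_pos _)

theorem totalWeight_insert_le (a : FreeGroup G) (S : Finset (FreeGroup G)) :
    totalWeight (insert a S) ≤ weight a + totalWeight S := by
  by_cases ha : a ∈ S
  · rw [Finset.insert_eq_of_mem ha]; omega
  · rw [totalWeight, Finset.sum_insert ha]; rfl

theorem totalWeight_insert_erase_lt {S : Finset (FreeGroup G)} {a t : FreeGroup G} (ht : t ∈ S)
    (h : weight a < weight t) : totalWeight (insert a (S.erase t)) < totalWeight S := by
  have := Finset.add_sum_erase S weight ht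
  have := totalWeight_insert_le a (S.erase t)
  simp only [totalWeight] at *
  omega

theorem totalWeight_translate_lt {S : Finset (FreeGroup G)} {y : G} (hne : S.Nonempty)
    (hS : ∀ t ∈ S, ∃ q, t.toWord = (y, true) :: q) :
    totalWeight (insert (of y)⁻¹ (S.image ((of y)⁻¹ * ·))) < totalWeight S := by
  have himage : totalWeight (S.image ((of y)⁻¹ * ·)) + 3 * S.card = totalWeight S := by
    rw [totalWeight, totalWeight, Finset.sum_image fun _ _ _ _ h => mul_left_cancel h,
      Finset.card_eq_sum_ones, Finset.mul_sum, ← Finset.sum_add_distrib]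
    refine Finset.sum_congr rfl fun t ht => ?_
    obtain ⟨q, hq⟩ := hS t ht
    rw [mul_one, weight_of_inv_mul hq]
  have hinv : weight (of y)⁻¹ = 2 := rfl
  have := totalWeight_insert_le (of y)⁻¹ (S.image ((of y)⁻¹ * ·))
  have := hne.card_pos
  omega

theorem cylOn_eq_zero_of_toWord_eq_append_inv_of {S : Finset (FreeGroup G)} {t : FreeGroup G}
    (ht : t ∈ S) {v r : List (G × Bool)} {x z : G}
    (hw : t.toWord = v ++ (x, false) :: (z, true) :: r) :
    cylOn A S = 0 := funext fun ξ => by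
  rw [cylOn, cyl_eq_ite_of_mem ht,
    (isCK_of_mem_omegaT ξ.2).apply_eq_false_of_toWord_eq_append_inv_of hw]
  rfl

theorem cylOn_erase_one (S : Finset (FreeGroup G)) : cylOn A (S.erase 1) = cylOn A S := by
  by_cases h : (1 : FreeGroup G) ∈ S
  · funext ξ
    rw [cylOn, cylOn, cyl_eq_ite_of_mem h, if_pos (isCK_of_mem_omegaT ξ.2).1]
  · rw [Finset.erase_eq_of_notMem h]

theorem cylOn_of_toWord_eq_append_inv_inv {S : Finset (FreeGroup G)} {t : FreeGroup G}
    (ht : t ∈ S) {v : List (G × Bool)} {x z : G} (hw : t.toWord = v ++ [(x, false), (z, false)]) :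
    cylOn A S = if A z x then cylOn A (insert (mk (v ++ [(x, false)])) (S.erase t)) else 0 := by
  funext ξ
  rw [cylOn, cyl_eq_ite_of_mem ht, (isCK_of_mem_omegaT ξ.2).apply_of_toWord_eq_append_inv_inv hw]
  cases A z x <;> simp [cylOn, cyl_insert]

theorem cylOn_eq_zero_of_heads_ne {S : Finset (FreeGroup G)} {t u : FreeGroup G} (ht : t ∈ S)
    (hu : u ∈ S) {y y' : G} {q q' : List (G × Bool)} (hwt : t.toWord = (y, true) :: q)
    (hwu : u.toWord = (y', true) :: q') (hne : y ≠ y') : cylOn A S = 0 := funext fun ξ => by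
  have hξ := isCK_of_mem_omegaT ξ.2
  rw [cylOn, cyl_eq_ite_of_mem ht, cyl_eq_ite_of_mem (Finset.mem_erase.mpr ⟨?_, hu⟩)]
  · split_ifs with hξt hξu
    · exact absurd (hξ.eq_of_apply_of (hξ.apply_of_of_toWord_eq_cons hξt hwt)
        (hξ.apply_of_of_toWord_eq_cons hξu hwu)) hne
    all_goals rfl
  · rintro rfl
    simp_all

theorem cylOn_of_inv_mem {S : Finset (FreeGroup G)} {t : FreeGroup G} (ht : t ∈ S) {y x : G}
    {q : List (G × Bool)} (hw : t.toWord = (y, true) :: q) (hx : (of x)⁻¹ ∈ S) :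
    cylOn A S = if A x y then cylOn A (S.erase (of x)⁻¹) else 0 := by
  have htx : t ∈ S.erase (of x)⁻¹ := Finset.mem_erase.mpr ⟨fun h => by
    simp [h, show ((of x)⁻¹ : FreeGroup G).toWord = [(x, false)] from rfl] at hw, ht⟩
  funext ξ
  have hξ := isCK_of_mem_omegaT ξ.2
  rw [cylOn, cyl_eq_ite_of_mem hx]
  by_cases hξt : ξ.1 t = true
  · rw [hξ.apply_of_inv (hξ.apply_of_of_toWord_eq_cons hξt hw)]
    cases A x y <;> rfl
  · rw [cyl_eq_ite_of_mem htx, if_neg hξt]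
    split_ifs <;> simp [cylOn, cyl_eq_ite_of_mem htx, hξt]

theorem cylOn_mem_frakR {S : Finset (FreeGroup G)} (hS : ∀ t ∈ S, ∃ x, t = (of x)⁻¹) :
    cylOn A S ∈ frakR A := by
  have : cylOn A S = ∏ t ∈ S, fun ξ : OmegaT A => if ξ.1 t = true then (1 : ℤ) else 0 := by
    funext ξ
    simp [cylOn, cyl, Finset.prod_apply, Finset.prod_boole]
  rw [this]
  refine Subring.prod_mem _ fun t ht => ?_
  obtain ⟨x, rfl⟩ := hS t ht
  exact Subring.subset_closure (.inr ⟨x, rfl⟩)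

theorem cyl_translate (s : FreeGroup G) (S : Finset (FreeGroup G)) (ξ : FreeGroup G → Bool) :
    cyl S (translate s ξ) = cyl (S.image (s⁻¹ * ·)) ξ := by
  simp only [cyl, translate]
  exact if_congr (Finset.forall_mem_image (p := fun i => ξ i = true)).symm rfl rfl

theorem cylOn_sub_cylOn_translate_mem_range {S : Finset (FreeGroup G)} {y : G} (hne : S.Nonempty)
    (hS : ∀ t ∈ S, ∃ q, t.toWord = (y, true) :: q) :
    cylOn A S - cylOn A (insert (of y)⁻¹ (S.image ((of y)⁻¹ * ·))) ∈ (lalphaHom A).range := by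
  refine ⟨⟨single A y (cyl S),
    single_mem_directSum y ((continuous_cyl S).comp continuous_subtype_val)⟩, funext fun ξ => ?_⟩
  obtain ⟨t, ht⟩ := hne
  obtain ⟨q, hq⟩ := hS t ht
  change Lalpha (single A y (cyl S)) ξ = cyl S ξ.1 - cyl _ ξ.1
  rw [lalpha_single y _ ξ.2, cyl_insert, cyl_translate]
  congr 1
  split_ifs with hy
  · rfl
  · rw [cyl_eq_ite_of_mem ht,
      if_neg fun h => hy ((isCK_of_mem_omegaT ξ.2).apply_of_of_toWord_eq_cons h hq)]

theorem cylOn_mem_lalphaRangeSupFrakR_of_shape {S : Finset (FreeGroup G)}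
    (ih : ∀ S', totalWeight S' < totalWeight S → cylOn A S' ∈ lalphaRangeSupFrakR A)
    (hS : ∀ t ∈ S, (∃ x, t = (of x)⁻¹) ∨ ∃ y q, t.toWord = (y, true) :: q) :
    cylOn A S ∈ lalphaRangeSupFrakR A := by
  by_cases hpos : ∃ t ∈ S, ∃ y q, t.toWord = (y, true) :: q
  swap
  · push Not at hpos
    exact AddSubgroup.mem_sup_right <| cylOn_mem_frakR fun t ht =>
      (hS t ht).resolve_right fun ⟨y, q, h⟩ => hpos t ht y q h
  obtain ⟨t, ht, y, q, hw⟩ := hpos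
  by_cases hhead : ∃ u ∈ S, ∃ y' q', u.toWord = (y', true) :: q' ∧ y ≠ y'
  · obtain ⟨u, hu, y', q', hwu, hne⟩ := hhead
    rw [cylOn_eq_zero_of_heads_ne ht hu hw hwu hne]
    exact zero_mem _
  by_cases hinv : ∃ x, (of x)⁻¹ ∈ S
  · obtain ⟨x, hx⟩ := hinv
    rw [cylOn_of_inv_mem ht hw hx]
    split
    · exact ih _ (totalWeight_erase_lt hx)
    · exact zero_mem _
  push Not at hhead hinv
  have hall : ∀ u ∈ S, ∃ q, u.toWord = (y, true) :: q := fun u hu => by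
    rcases hS u hu with ⟨x, rfl⟩ | ⟨y', q', hwu⟩
    · exact absurd hu (hinv x)
    · exact ⟨q', by rw [hwu, hhead u hu y' q' hwu]⟩
  have hlalpha : cylOn A S - cylOn A (insert (of y)⁻¹ (S.image ((of y)⁻¹ * ·))) ∈
      lalphaRangeSupFrakR A :=
    AddSubgroup.mem_sup_left (cylOn_sub_cylOn_translate_mem_range ⟨t, ht⟩ hall)
  simpa only [sub_add_cancel] using add_mem hlalpha (ih _ (totalWeight_translate_lt ⟨t, ht⟩ hall))

theorem cylOn_mem_lalphaRangeSupFrakR (S : Finset (FreeGroup G)) :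
    cylOn A S ∈ lalphaRangeSupFrakR A := by
  refine (measure totalWeight).wf.induction (C := fun S => cylOn A S ∈ lalphaRangeSupFrakR A) S
    fun S ih => ?_
  replace ih : ∀ S', totalWeight S' < totalWeight S → cylOn A S' ∈ lalphaRangeSupFrakR A := ih
  by_cases hnn : ∃ t ∈ S, ∃ v x z r, t.toWord = v ++ (x, false) :: (z, true) :: r
  · obtain ⟨t, ht, v, x, z, r, hw⟩ := hnn
    rw [cylOn_eq_zero_of_toWord_eq_append_inv_of ht hw]
    exact zero_mem _
  by_cases h1 : (1 : FreeGroup G) ∈ S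
  · rw [← cylOn_erase_one]
    exact ih _ (totalWeight_erase_lt h1)
  by_cases hii : ∃ t ∈ S, ∃ v x z, t.toWord = v ++ [(x, false), (z, false)]
  · obtain ⟨t, ht, v, x, z, hw⟩ := hii
    rw [cylOn_of_toWord_eq_append_inv_inv ht hw]
    split
    · exact ih _ (totalWeight_insert_erase_lt ht (weight_mk_lt hw))
    · exact zero_mem _
  push Not at hnn hii
  refine cylOn_mem_lalphaRangeSupFrakR_of_shape ih fun t ht => ?_
  rcases word_shape_cases t.toWord with hw | ⟨x, hw⟩ | ⟨y, q, hw⟩ | ⟨v, x, z, r, hw⟩ |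
    ⟨v, x, z, hw⟩
  · exact absurd (toWord_eq_nil_iff.mp hw ▸ ht) h1
  · exact .inl ⟨x, by rw [← mk_toWord (x := t), hw]; rfl⟩
  · exact .inr ⟨y, q, hw⟩
  · exact absurd hw (hnn t ht v x z r)
  · exact absurd hw (hii t ht v x z)

theorem continuous_mem_lalphaRangeSupFrakR (g : C(OmegaT A, ℤ)) : ⇑g ∈ lalphaRangeSupFrakR A := by
  obtain ⟨F, hF⟩ := isClosed_closure.isCompact.exists_finset_forall_eq_of_continuous g
  refine (AddSubgroup.closure_le _).mpr ?_ (mem_closure_range_cyl hF)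
  rintro _ ⟨S, rfl⟩
  exact cylOn_mem_lalphaRangeSupFrakR S

end CKO

theorem stmt_14_general {G : Type*} [DecidableEq G]
    (A : G → G → Bool)
    (g : C(CKO.OmegaT A, ℤ)) :
    ∃ f : G → (FreeGroup G → Bool) → ℤ, CKO.MemDirectSum A f ∧
      ∃ h ∈ CKO.frakR A, ∀ ξ : CKO.OmegaT A,
        g ξ = CKO.Lalpha f (ξ : FreeGroup G → Bool) + h ξ := by
  obtain ⟨_, ⟨f, rfl⟩, h, hh, hg⟩ :=
    AddSubgroup.mem_sup.mp (CKO.continuous_mem_lalphaRangeSupFrakR g)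
  exact ⟨f.1, f.2, h, hh, fun ξ => (congrFun hg ξ).symm⟩

/-- Every continuous `g : Ω̃_A → ℤ` is congruent, modulo the image of
`L_α`, to an element of the ring `ℜ` generated by `1` and the characteristic functions of the
`Δ_i` and `Δ_{i⁻¹}`. -/
theorem stmt_14 {G : Type*} [Nonempty G] [DecidableEq G]
    (A : G → G → Bool) (hA : ∀ i : G, ∃ j : G, A i j = true)
    (g : C(CKO.OmegaT A, ℤ)) :
    ∃ f : G → (FreeGroup G → Bool) → ℤ, CKO.MemDirectSum A f ∧
      ∃ h ∈ CKO.frakR A, ∀ ξ : CKO.OmegaT A,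
        g ξ = CKO.Lalpha f (ξ : FreeGroup G → Bool) + h ξ :=
  stmt_14_general A g
end
end

section
/- Suppose that any two rows of A are either equal or disjoint: for all i, j ∈ 𝒢, either ρ_i = ρ_j or ρ_i(k)·ρ_j(k) = 0 for all k ∈ 𝒢 (this holds in particular when A is the edge matrix of a directed graph, i.e. 𝒢 is the edge set and A(i,j) = 1 exactly when the range of edge i equals the source of edge j). Then: (a) R_A equals the closure in ℓ^∞(𝒢) of the complex linear span of {ρ_i : i ∈ 𝒢} ∪ {δ_i : i ∈ 𝒢}; and (b) 𝔯_A equals the additive subgroup of ℤ^𝒢 generated by {ρ_i : i ∈ 𝒢} ∪ {δ_i : i ∈ 𝒢}. -/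
open scoped BoundedContinuousFunction
open OnePoint

noncomputable section

namespace CK

variable {G : Type*}

/-- The `i`-th row of `A` as a complex-valued function on `G`. -/
def rho (A : G → G → Bool) (i : G) : G → ℂ := fun j => if A i j then 1 else 0

/-- The `i`-th row of the identity matrix as a complex-valued function on `G`. -/
def del [DecidableEq G] (i : G) : G → ℂ := fun j => if j = i then 1 else 0

/-- The `j`-th column of `A` as an element of `{0,1}^G`. -/
def col (A : G → G → Bool) (j : G) : G → Bool := fun i => A i j

variable [TopologicalSpace G] [DiscreteTopology G]

/-- `rho A i` as an element of `ℓ^∞(G)`, realized as bounded (continuous) functions on the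
discrete space `G`. -/
def rhoB (A : G → G → Bool) (i : G) : G →ᵇ ℂ :=
  BoundedContinuousFunction.ofNormedAddCommGroupDiscrete (rho A i) 1
    (by intro j; simp only [rho]; split <;> simp)

/-- `del i` as an element of `ℓ^∞(G)`. -/
def delB [DecidableEq G] (i : G) : G →ᵇ ℂ :=
  BoundedContinuousFunction.ofNormedAddCommGroupDiscrete (del i) 1
    (by intro j; simp only [del]; split <;> simp)

/-- The space `Γ̃_A`: the closure of `{(j, c_j) : j ∈ G}` in `G̃ × {0,1}^G`. -/
def GammaT (A : G → G → Bool) : Set (OnePoint G × (G → Bool)) :=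
  closure {p | ∃ j : G, p = ((j : OnePoint G), col A j)}

instance GammaT.compactSpace (A : G → G → Bool) : CompactSpace (GammaT A) :=
  isCompact_iff_compactSpace.mp (isClosed_closure).isCompact

variable [DecidableEq G]

/-- The generators of `R_A`: the rows of `A` and of the identity matrix. -/
def gens (A : G → G → Bool) : Set (G →ᵇ ℂ) :=
  Set.range (rhoB A) ∪ Set.range (delB (G := G))

/-- `R_A`, the smallest closed *-subalgebra of `ℓ^∞(G)` containing the rows of `A` and of the
identity matrix: the closure of the non-unital star subalgebra generated by them. -/
def RA (A : G → G → Bool) : Set (G →ᵇ ℂ) :=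
  closure (NonUnitalStarAlgebra.adjoin ℂ (gens A) : Set (G →ᵇ ℂ))

/-- `R̃_A`, the smallest closed unital *-subalgebra of `ℓ^∞(G)` containing `R_A` and `1`. -/
def RtA (A : G → G → Bool) : StarSubalgebra ℂ (G →ᵇ ℂ) :=
  (StarAlgebra.adjoin ℂ (gens A)).topologicalClosure

/-- The restriction map `Φ : C(Γ̃_A, ℂ) → ℓ^∞(G)`, `Φ(f)(j) = f(j, c_j)`. -/
def Phi (A : G → G → Bool) (f : C(GammaT A, ℂ)) : G →ᵇ ℂ :=
  BoundedContinuousFunction.ofNormedAddCommGroupDiscrete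
    (fun j => f ⟨((j : OnePoint G), col A j), subset_closure ⟨j, rfl⟩⟩) ‖f‖
    (fun j => f.norm_coe_le_norm _)

end CK

namespace CK

/-- The `i`-th row of `A` as an integer-valued function. -/
def rhoZ {G : Type*} (A : G → G → Bool) (i : G) : G → ℤ := fun j => if A i j then 1 else 0

/-- The `i`-th row of the identity matrix as an integer-valued function. -/
def delZ {G : Type*} [DecidableEq G] (i : G) : G → ℤ := fun j => if j = i then 1 else 0

/-- The generators of the ring `𝔯_A`. -/
def gensZ {G : Type*} [DecidableEq G] (A : G → G → Bool) : Set (G → ℤ) :=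
  Set.range (rhoZ A) ∪ Set.range (delZ (G := G))

/-- `𝔯_A`, the subring of `ℤ^G` generated by the rows of `A` and of the identity matrix. -/
def frakRA {G : Type*} [DecidableEq G] (A : G → G → Bool) : NonUnitalSubring (G → ℤ) :=
  NonUnitalSubring.closure (gensZ A)

end CK

/-! The generators are the indicator functions of the sets in the family `genSets A` of rows of
`A` and singletons, and when two rows are equal or disjoint the intersection of two members of
this family is empty or again a member. As indicators multiply by intersecting their sets, the
product of two generators is `0` or a generator, and every generator is self-adjoint. Hence the
linear span (resp. the additive subgroup) of the generators is already closed under products and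
`star`, so it is the `*`-subalgebra (resp. subring) they generate. -/

open Pointwise

theorem Subsemigroup.coe_closure_subset_insert_zero {M : Type*} [SemigroupWithZero M]
    {s : Set M} (hs : s * s ⊆ insert 0 s) : (closure s : Set M) ⊆ insert 0 s := by
  let t : Subsemigroup M :=
    { carrier := insert 0 s
      mul_mem' := by
        rintro a b (rfl | ha) hb
        · rw [zero_mul]; exact Set.mem_insert 0 s
        rcases hb with rfl | hb
        · rw [mul_zero]; exact Set.mem_insert 0 s
        exact hs (Set.mul_mem_mul ha hb) }
  exact closure_le (S := t) |>.mpr (Set.subset_insert 0 s)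

theorem NonUnitalAlgebra.adjoin_eq_span_of_mul_subset {R A : Type*} [CommSemiring R]
    [NonUnitalSemiring A] [Module R A] [IsScalarTower R A A] [SMulCommClass R A A]
    {s : Set A} (hs : s * s ⊆ insert 0 s) :
    (adjoin R s).toSubmodule = Submodule.span R s := by
  rw [adjoin_eq_span]
  refine le_antisymm ?_ (Submodule.span_mono Subsemigroup.subset_closure)
  rw [Submodule.span_le]
  intro x hx
  rcases Subsemigroup.coe_closure_subset_insert_zero hs hx with rfl | hx
  · exact zero_mem _
  · exact Submodule.subset_span hx

theorem NonUnitalStarAlgebra.adjoin_eq_span_of_mul_subset {R A : Type*} [CommSemiring R]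
    [StarRing R] [NonUnitalSemiring A] [StarRing A] [Module R A] [IsScalarTower R A A]
    [SMulCommClass R A A] [StarModule R A] {s : Set A} (hsa : ∀ x ∈ s, IsSelfAdjoint x)
    (hs : s * s ⊆ insert 0 s) :
    (adjoin R s).toSubmodule = Submodule.span R s := by
  have hstar : s ∪ star s = s := by
    refine Set.union_eq_left.mpr fun x (hx : star x ∈ s) => ?_
    rw [← star_star x, (hsa _ hx).star_eq]
    exact hx
  rw [adjoin_eq_span, ← NonUnitalAlgebra.adjoin_eq_span, hstar,
    NonUnitalAlgebra.adjoin_eq_span_of_mul_subset hs]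

theorem NonUnitalSubring.closure_toAddSubgroup_of_mul_subset {R : Type*} [NonUnitalRing R]
    {s : Set R} (hs : s * s ⊆ insert 0 s) :
    (closure s).toAddSubgroup = AddSubgroup.closure s := by
  ext x
  refine mem_closure_iff.trans ⟨fun hx => AddSubgroup.closure_le _ |>.mpr (fun y hy => ?_) hx,
    fun hx => AddSubgroup.closure_mono Subsemigroup.subset_closure hx⟩
  rcases Subsemigroup.coe_closure_subset_insert_zero hs hy with rfl | hy
  · exact zero_mem _
  · exact AddSubgroup.subset_closure hy

theorem Set.mul_subset_insert_zero_of_injective {M N F : Type*} [MulZeroClass M]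
    [MulZeroClass N] [FunLike F M N] [MulHomClass F M N] {f : F} (hf : Function.Injective f)
    (hzero : f 0 = 0) {s : Set M} (h : f '' s * f '' s ⊆ insert 0 (f '' s)) :
    s * s ⊆ insert 0 s := by
  rwa [← image_mul, ← hzero, ← image_insert_eq, image_subset_image_iff hf] at h

theorem Set.indicator_one_image_mul_subset {ι M₀ : Type*} [MulZeroOneClass M₀]
    {𝒮 : Set (Set ι)} (h𝒮 : ∀ S ∈ 𝒮, ∀ T ∈ 𝒮, S ∩ T ∈ insert ∅ 𝒮) :
    (fun S => S.indicator (1 : ι → M₀)) '' 𝒮 * (fun S => S.indicator 1) '' 𝒮 ⊆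
      insert 0 ((fun S => S.indicator 1) '' 𝒮) := by
  rintro _ ⟨_, ⟨S, hS, rfl⟩, _, ⟨T, hT, rfl⟩, rfl⟩
  show S.indicator 1 * T.indicator 1 ∈ _
  rw [← inter_indicator_one]
  rcases h𝒮 S hS T hT with h | h
  · left; rw [h, indicator_empty']
  · exact Or.inr (mem_image_of_mem _ h)

namespace CK

variable {G : Type*}

def rowSet (A : G → G → Bool) (i : G) : Set G := {j | A i j}

def genSets (A : G → G → Bool) : Set (Set G) := Set.range (rowSet A) ∪ Set.range singleton

def RowsEqOrDisjoint (A : G → G → Bool) : Prop :=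
  ∀ i j : G, rhoZ A i = rhoZ A j ∨ ∀ k : G, rhoZ A i k * rhoZ A j k = 0

theorem rhoZ_eq_indicator (A : G → G → Bool) (i : G) : rhoZ A i = (rowSet A i).indicator 1 := by
  ext j
  by_cases h : A i j <;> simp [rhoZ, rowSet, h]

theorem delZ_eq_indicator [DecidableEq G] (i : G) : delZ i = ({i} : Set G).indicator 1 := by
  ext j
  by_cases h : j = i <;> simp [delZ, h]

theorem rowSet_inter_eq_or_eq_empty {A : G → G → Bool} (hA : RowsEqOrDisjoint A)
    (i j : G) : rowSet A i ∩ rowSet A j = rowSet A i ∨ rowSet A i ∩ rowSet A j = ∅ := by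
  rcases hA i j with h | h
  · rw [rhoZ_eq_indicator, rhoZ_eq_indicator] at h
    left
    rw [Set.indicator_one_inj ℤ h, Set.inter_self]
  · refine Or.inr (Set.indicator_one_inj ℤ ?_)
    ext k
    simpa [Set.inter_indicator_one, ← rhoZ_eq_indicator] using h k

theorem inter_mem_genSets {A : G → G → Bool} (hA : RowsEqOrDisjoint A) {S T : Set G}
    (hS : S ∈ genSets A) (hT : T ∈ genSets A) : S ∩ T ∈ insert ∅ (genSets A) := by
  rcases hT with ⟨j, rfl⟩ | ⟨j, rfl⟩
  · rcases hS with ⟨i, rfl⟩ | ⟨i, rfl⟩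
    · rcases rowSet_inter_eq_or_eq_empty hA i j with h | h
      · rw [h]; exact Or.inr (Or.inl ⟨i, rfl⟩)
      · exact Or.inl h
    · rcases Set.subset_singleton_iff_eq.mp (Set.inter_subset_left (s := {i}) (t := rowSet A j))
        with h | h
      · exact Or.inl h
      · rw [h]; exact Or.inr (Or.inr ⟨i, rfl⟩)
  · rcases Set.subset_singleton_iff_eq.mp (Set.inter_subset_right (s := S) (t := {j})) with h | h
    · exact Or.inl h
    · rw [h]; exact Or.inr (Or.inr ⟨j, rfl⟩)

variable [DecidableEq G]

theorem gensZ_eq_image_genSets (A : G → G → Bool) :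
    gensZ A = (fun S => S.indicator 1) '' genSets A := by
  simp only [gensZ, genSets, Set.image_union, ← Set.range_comp]
  congr 2 <;> funext i
  · exact rhoZ_eq_indicator A i
  · exact delZ_eq_indicator i

theorem gensZ_mul_subset {A : G → G → Bool} (hA : RowsEqOrDisjoint A) :
    gensZ A * gensZ A ⊆ insert 0 (gensZ A) := by
  rw [gensZ_eq_image_genSets]
  exact Set.indicator_one_image_mul_subset fun _ hS _ hT => inter_mem_genSets hA hS hT

variable [TopologicalSpace G] [DiscreteTopology G]

theorem coe_image_gens_eq_image_genSets (A : G → G → Bool) :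
    BoundedContinuousFunction.coeFnMonoidHom '' gens A =
      (fun S => S.indicator 1) '' genSets A := by
  simp only [gens, genSets, Set.image_union, ← Set.range_comp]
  congr 2 <;> ext i k
  · by_cases h : A i k <;> simp [rhoB, rho, rowSet, h]
  · by_cases h : k = i <;> simp [delB, del, h]

theorem isSelfAdjoint_of_mem_gens {A : G → G → Bool} {x : G →ᵇ ℂ} (hx : x ∈ gens A) :
    IsSelfAdjoint x := by
  rcases hx with ⟨i, rfl⟩ | ⟨i, rfl⟩ <;> ext k
  · by_cases h : A i k <;> simp [rhoB, rho, h]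
  · by_cases h : k = i <;> simp [delB, del, h]

theorem gens_mul_subset {A : G → G → Bool} (hA : RowsEqOrDisjoint A) :
    gens A * gens A ⊆ insert 0 (gens A) := by
  refine Set.mul_subset_insert_zero_of_injective (f := BoundedContinuousFunction.coeFnMonoidHom)
    DFunLike.coe_injective rfl ?_
  rw [coe_image_gens_eq_image_genSets]
  exact Set.indicator_one_image_mul_subset fun _ hS _ hT => inter_mem_genSets hA hS hT

end CK

theorem stmt_17_general {G : Type*} [TopologicalSpace G] [DiscreteTopology G]
    [DecidableEq G] (A : G → G → Bool)
    (hedge : ∀ i j : G, (CK.rhoZ A i = CK.rhoZ A j) ∨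
      (∀ k : G, CK.rhoZ A i k * CK.rhoZ A j k = 0)) :
    CK.RA A =
      closure ((Submodule.span ℂ (Set.range (CK.rhoB A) ∪ Set.range (CK.delB (G := G)))) :
        Set (G →ᵇ ℂ)) ∧
    (CK.frakRA A : Set (G → ℤ)) = (AddSubgroup.closure (CK.gensZ A) : Set (G → ℤ)) := by
  refine ⟨?_, ?_⟩
  · have h := NonUnitalStarAlgebra.adjoin_eq_span_of_mul_subset (R := ℂ)
      (fun _ => CK.isSelfAdjoint_of_mem_gens) (CK.gens_mul_subset hedge)
    exact congrArg (closure ∘ SetLike.coe) h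
  · exact congrArg SetLike.coe
      (NonUnitalSubring.closure_toAddSubgroup_of_mul_subset (CK.gensZ_mul_subset hedge))

/-- If any two rows of `A` are equal or disjoint (e.g. when `A` is an edge
matrix of a directed graph), then (a) `R_A` is the closed linear span of the rows of `A` and of
the identity matrix, and (b) `𝔯_A` is the additive subgroup of `ℤ^G` they generate. -/
theorem stmt_17 {G : Type*} [Nonempty G] [TopologicalSpace G] [DiscreteTopology G]
    [DecidableEq G] (A : G → G → Bool) (hA : ∀ i : G, ∃ j : G, A i j = true)
    (hedge : ∀ i j : G, (CK.rhoZ A i = CK.rhoZ A j) ∨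
      (∀ k : G, CK.rhoZ A i k * CK.rhoZ A j k = 0)) :
    CK.RA A =
      closure ((Submodule.span ℂ (Set.range (CK.rhoB A) ∪ Set.range (CK.delB (G := G)))) :
        Set (G →ᵇ ℂ)) ∧
    (CK.frakRA A : Set (G → ℤ)) = (AddSubgroup.closure (CK.gensZ A) : Set (G → ℤ)) :=
  stmt_17_general A hedge
end
end

section
/- Let A be the ℕ × ℕ matrix with A(i,j) = 1 for all i, j (so every row ρ_i equals the constant function 𝟏). Then: (a) 𝔯_A = {g + n·𝟏 : g ∈ ⊕_ℕ ℤ, n ∈ ℤ}, the ring of eventually constant integer sequences, and each h ∈ 𝔯_A has a unique such decomposition h = g + n·𝟏; (b) the group homomorphism T : ⊕_ℕ ℤ → 𝔯_A defined by T(f) := f − (Σ_n f(n))·𝟏 (which is the map (I − Aᵗ), since T(δ_i) = δ_i − ρ_i) is injective; (c) the map φ : 𝔯_A → ℤ given by φ(g + n·𝟏) := n + Σ_k g(k) is a well-defined surjective group homomorphism whose kernel is exactly the image of T; consequently 𝔯_A / im T ≅ ℤ. (Via the identifications K₁ ≅ ker(I − Aᵗ) and K₀ ≅ coker(I − Aᵗ),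 this recovers K₁(𝒪_∞) = 0 and K₀(𝒪_∞) = ℤ.) -/
noncomputable section

namespace CK18

/-- The `i`-th row of the identity matrix over `ℕ`, as an integer sequence. -/
def delta (i : ℕ) : ℕ → ℤ := fun j => if j = i then 1 else 0

/-- The `i`-th row of the all-ones matrix `A`: the constant sequence `𝟏`. -/
def rho (_ : ℕ) : ℕ → ℤ := fun _ => 1

/-- `𝔯_A`, the subring of `ℤ^ℕ` generated by the rows of `A` and of the identity matrix. -/
def frakRA : NonUnitalSubring (ℕ → ℤ) :=
  NonUnitalSubring.closure (Set.range rho ∪ Set.range delta)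

/-- The map `T = (I - Aᵗ) : ⊕_ℕ ℤ → ℤ^ℕ`, `T f = f - (Σ_n f(n))·𝟏`. -/
def T (f : ℕ →₀ ℤ) : ℕ → ℤ := fun j => f j - f.sum fun _ v => v

end CK18

/-!
Each generator `ρ_i = 𝟏`, `δ_i` has the form `g + n·𝟏` with `g` finitely supported; these
functions form a ring, and each of them is a ℤ-combination of generators, so they are exactly
`𝔯_A`. Over an infinite index set the decomposition is unique (read off `n` at a point outside the
support of `g`), so `𝔯_A ≃+ (⊕_ℕ ℤ) × ℤ`. In these coordinates `T f = (f, -Σ f)`, which is visibly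
injective, and `φ (g, n) = n + Σ g` is a surjection vanishing exactly on the pairs `(f, -Σ f)`.
-/

namespace CK18

section EventuallyConst

variable (α R : Type*)

def addConst [AddCommMonoid R] : (α →₀ R) × R →+ (α → R) :=
  Finsupp.coeFnAddHom.coprod (Pi.constAddMonoidHom α R)

variable {α R}

@[simp]
lemma addConst_apply [AddCommMonoid R] (g : α →₀ R) (n : R) :
    addConst α R (g, n) = (⇑g + fun _ => n) :=
  rfl

lemma addConst_injective [Infinite α] [AddCommGroup R] : Function.Injective (addConst α R) := by
  refine (injective_iff_map_eq_zero _).mpr fun ⟨g, n⟩ h => ?_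
  obtain ⟨j, hj⟩ := Infinite.exists_notMem_finset g.support
  have hn : n = 0 := by simpa [Finsupp.notMem_support_iff.mp hj] using congrFun h j
  subst hn
  have hg : ⇑g = 0 := funext fun k => by simpa using congrFun h k
  exact Prod.ext (Finsupp.coe_eq_zero.mp hg) rfl

lemma coe_add_const_inj [Infinite α] [AddCommGroup R] {g g' : α →₀ R} {n n' : R} :
    (⇑g + fun _ => n) = (⇑g' + fun _ => n') ↔ g = g' ∧ n = n' :=
  (addConst_injective.eq_iff (a := (g, n)) (b := (g', n'))).trans Prod.mk_inj

variable (α R)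

def eventuallyConst [CommRing R] : Subring (α → R) where
  carrier := Set.range (addConst α R)
  zero_mem' := ⟨0, map_zero _⟩
  one_mem' := ⟨(0, 1), by ext; simp⟩
  add_mem' := by
    rintro _ _ ⟨p, rfl⟩ ⟨q, rfl⟩
    exact ⟨p + q, map_add _ p q⟩
  neg_mem' := by
    rintro _ ⟨p, rfl⟩
    exact ⟨-p, map_neg _ p⟩
  mul_mem' := by
    rintro _ _ ⟨⟨g, n⟩, rfl⟩ ⟨⟨g', n'⟩, rfl⟩
    refine ⟨(g * g' + n • g' + n' • g, n * n'), ?_⟩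
    ext j
    simp only [addConst_apply, Finsupp.coe_add, Finsupp.coe_mul, Finsupp.coe_smul, Pi.add_apply,
      Pi.mul_apply, Pi.smul_apply, smul_eq_mul]
    ring

def totalSum [AddCommMonoid R] : (α →₀ R) × R →+ R where
  toFun p := p.2 + p.1.sum fun _ v => v
  map_zero' := by simp
  map_add' p q := by
    simp only [Prod.fst_add, Prod.snd_add]
    rw [Finsupp.sum_add_index' (fun _ => rfl) (fun _ _ _ => rfl)]
    abel

variable {α R}

@[simp]
lemma totalSum_apply [AddCommMonoid R] (g : α →₀ R) (n : R) :
    totalSum α R (g, n) = n + g.sum fun _ v => v :=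
  rfl

end EventuallyConst

lemma rho_eq_addConst (i : ℕ) : rho i = addConst ℕ ℤ (0, 1) := by
  ext; simp [rho]

lemma delta_eq_addConst (i : ℕ) : delta i = addConst ℕ ℤ (Finsupp.single i 1, 0) := by
  ext; simp [delta, Finsupp.single_apply, eq_comm]

lemma T_eq_addConst (f : ℕ →₀ ℤ) : T f = addConst ℕ ℤ (f, -f.sum fun _ v => v) := by
  ext; simp [T, sub_eq_add_neg]

lemma T_single (i : ℕ) : T (Finsupp.single i 1) = delta i - rho i := by
  ext j
  simp [T, delta, rho, Finsupp.single_apply, eq_comm]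

lemma T_injective : Function.Injective T := by
  intro f f' h
  rw [T_eq_addConst, T_eq_addConst] at h
  exact congrArg Prod.fst (addConst_injective h)

lemma rho_mem_frakRA (i : ℕ) : rho i ∈ frakRA :=
  NonUnitalSubring.subset_closure (Or.inl ⟨i, rfl⟩)

lemma delta_mem_frakRA (i : ℕ) : delta i ∈ frakRA :=
  NonUnitalSubring.subset_closure (Or.inr ⟨i, rfl⟩)

lemma coe_finsupp_mem_frakRA (g : ℕ →₀ ℤ) : (⇑g : ℕ → ℤ) ∈ frakRA := by
  induction g using Finsupp.induction_linear with
  | zero => exact frakRA.zero_mem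
  | add f g hf hg => exact add_mem hf hg
  | single i b =>
    have : (⇑(Finsupp.single i b) : ℕ → ℤ) = b • delta i := by
      ext; simp [delta, Finsupp.single_apply, eq_comm]
    exact this ▸ zsmul_mem (delta_mem_frakRA i) b

lemma const_mem_frakRA (n : ℤ) : (fun _ => n : ℕ → ℤ) ∈ frakRA := by
  have : (fun _ => n : ℕ → ℤ) = n • rho 0 := by ext; simp [rho]
  exact this ▸ zsmul_mem (rho_mem_frakRA 0) n

lemma frakRA_eq_eventuallyConst : frakRA = (eventuallyConst ℕ ℤ).toNonUnitalSubring := by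
  refine le_antisymm (NonUnitalSubring.closure_le.mpr ?_) ?_
  · rintro _ (⟨i, rfl⟩ | ⟨i, rfl⟩)
    · exact ⟨_, (rho_eq_addConst i).symm⟩
    · exact ⟨_, (delta_eq_addConst i).symm⟩
  · rintro _ ⟨⟨g, n⟩, rfl⟩
    exact add_mem (coe_finsupp_mem_frakRA g) (const_mem_frakRA n)

lemma mem_frakRA_iff {h : ℕ → ℤ} : h ∈ frakRA ↔ ∃ p, addConst ℕ ℤ p = h := by
  rw [frakRA_eq_eventuallyConst]
  rfl

lemma coe_frakRA :
    (frakRA : Set (ℕ → ℤ)) = {h | ∃ (g : ℕ →₀ ℤ) (n : ℤ), h = (⇑g : ℕ → ℤ) + fun _ => n} := by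
  ext h
  simp only [SetLike.mem_coe, mem_frakRA_iff, Prod.exists, addConst_apply, Set.mem_ofPred_eq,
    eq_comm]

lemma addConst_mem_frakRA (p : (ℕ →₀ ℤ) × ℤ) : addConst ℕ ℤ p ∈ frakRA :=
  mem_frakRA_iff.mpr ⟨p, rfl⟩

lemma T_mem_frakRA (f : ℕ →₀ ℤ) : T f ∈ frakRA :=
  T_eq_addConst f ▸ addConst_mem_frakRA _

def addConstEquiv : (ℕ →₀ ℤ) × ℤ ≃+ frakRA :=
  AddEquiv.ofBijective ((addConst ℕ ℤ).codRestrict frakRA addConst_mem_frakRA)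
    ⟨fun _ _ h => addConst_injective (congrArg Subtype.val h),
      fun x => (mem_frakRA_iff.mp x.2).imp fun _ hp => Subtype.ext hp⟩

@[simp]
lemma coe_addConstEquiv (p : (ℕ →₀ ℤ) × ℤ) : (addConstEquiv p : ℕ → ℤ) = addConst ℕ ℤ p :=
  rfl

def phi : frakRA →+ ℤ :=
  (totalSum ℕ ℤ).comp addConstEquiv.symm.toAddMonoidHom

lemma phi_addConstEquiv (p : (ℕ →₀ ℤ) × ℤ) : phi (addConstEquiv p) = totalSum ℕ ℤ p := by
  simp [phi]

lemma phi_surjective : Function.Surjective phi :=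
  fun n => ⟨addConstEquiv (0, n), by simp [phi_addConstEquiv]⟩

lemma phi_eq_zero_iff (x : frakRA) : phi x = 0 ↔ ∃ f : ℕ →₀ ℤ, (x : ℕ → ℤ) = T f := by
  obtain ⟨⟨g, n⟩, rfl⟩ := addConstEquiv.surjective x
  simp only [phi_addConstEquiv, totalSum_apply, coe_addConstEquiv, T_eq_addConst,
    addConst_injective.eq_iff, Prod.mk.injEq]
  constructor
  · exact fun h => ⟨g, rfl, eq_neg_of_add_eq_zero_left h⟩
  · rintro ⟨f, rfl, rfl⟩
    exact neg_add_cancel _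

lemma closure_range_T_eq_ker_phi :
    AddSubgroup.closure {x : frakRA | ∃ f : ℕ →₀ ℤ, (x : ℕ → ℤ) = T f} = phi.ker := by
  have hset : {x : frakRA | ∃ f : ℕ →₀ ℤ, (x : ℕ → ℤ) = T f} = phi.ker :=
    Set.ext fun x => (phi_eq_zero_iff x).symm
  rw [hset, AddSubgroup.closure_eq]

end CK18

/-- For the all-ones `ℕ × ℕ` matrix `A`: (a) `𝔯_A` is the ring of
eventually constant integer sequences `g + n·𝟏` (with `g` finitely supported), the
decomposition being unique; (b) `T = (I - Aᵗ)` maps into `𝔯_A`, sends `δ_i` to `δ_i - ρ_i`,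
and is injective; (c) `φ(g + n·𝟏) = n + Σ_k g(k)` is a well-defined surjective homomorphism
`𝔯_A → ℤ` with kernel exactly `im T`; consequently `𝔯_A / im T ≅ ℤ`
(recovering `K₁(𝒪_∞) = 0` and `K₀(𝒪_∞) = ℤ`). -/
theorem stmt_18 :
    -- (a): description of `𝔯_A` and uniqueness of the decomposition
    ((CK18.frakRA : Set (ℕ → ℤ)) =
      {h : ℕ → ℤ | ∃ (g : ℕ →₀ ℤ) (n : ℤ), h = (⇑g : ℕ → ℤ) + fun _ => n}) ∧
    (∀ (g g' : ℕ →₀ ℤ) (n n' : ℤ),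
      ((⇑g : ℕ → ℤ) + fun _ => n) = ((⇑g' : ℕ → ℤ) + fun _ => n') → g = g' ∧ n = n') ∧
    -- (b): `T` maps into `𝔯_A`, `T δ_i = δ_i - ρ_i`, and `T` is injective
    (∀ f : ℕ →₀ ℤ, CK18.T f ∈ CK18.frakRA) ∧
    (∀ i : ℕ, CK18.T (Finsupp.single i 1) = CK18.delta i - CK18.rho i) ∧
    Function.Injective CK18.T ∧
    -- (c): the index map `φ` and the computation of the cokernel of `T`
    (∃ φ : CK18.frakRA →+ ℤ,
      (∀ (g : ℕ →₀ ℤ) (n : ℤ) (h : ((⇑g : ℕ → ℤ) + fun _ => n) ∈ CK18.frakRA),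
        φ ⟨(⇑g : ℕ → ℤ) + fun _ => n, h⟩ = n + g.sum fun _ v => v) ∧
      Function.Surjective φ ∧
      (∀ x : CK18.frakRA, φ x = 0 ↔ ∃ f : ℕ →₀ ℤ, (x : ℕ → ℤ) = CK18.T f)) ∧
    Nonempty ((CK18.frakRA ⧸ AddSubgroup.closure
      {x : CK18.frakRA | ∃ f : ℕ →₀ ℤ, (x : ℕ → ℤ) = CK18.T f}) ≃+ ℤ) := by
  open CK18 in
  exact ⟨coe_frakRA, fun _ _ _ _ => coe_add_const_inj.mp, T_mem_frakRA, T_single, T_injective,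
    ⟨phi, fun g n _ => phi_addConstEquiv (g, n), phi_surjective, phi_eq_zero_iff⟩,
    ⟨(QuotientAddGroup.quotientAddEquivOfEq closure_range_T_eq_ker_phi).trans
      (QuotientAddGroup.quotientKerEquivOfSurjective phi phi_surjective)⟩⟩
end
end

section
/- Let A be the ℕ × ℕ matrix with A(i,j) = 1 if i + j is odd and A(i,j) = 0 otherwise (the 'checkerboard' matrix; its i-th row ρ_i is 𝟏_odd for even i and 𝟏_even for odd i). Then: (a) 𝔯_A = {g + a·𝟏_even + b·𝟏_odd : g ∈ ⊕_ℕ ℤ, a, b ∈ ℤ}, and each h ∈ 𝔯_A has a unique such decomposition; (b) the group homomorphism T : ⊕_ℕ ℤ → 𝔯_A defined by T(f) := f − (Σ_{n odd} f(n))·𝟏_even − (Σ_{n even} f(n))·𝟏_odd (which is the map (I − Aᵗ), since T(δ_i) = δ_i − ρ_i) is injective; (c) the map φ : 𝔯_A → ℤ × ℤ given by φ(g + a·𝟏_even + b·𝟏_odd) := (a + Σ_{n odd} g(n), b + Σ_{n even} g(n)) is a well-defined surjective group homomorphism whose kernel is exactly the image of T; consequently 𝔯_A / im T ≅ ℤ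 × ℤ. (Via the identifications K₁ ≅ ker(I − Aᵗ) and K₀ ≅ coker(I − Aᵗ), this gives K₁(𝒪_A) = 0 and K₀(𝒪_A) = ℤ × ℤ.) -/
/-!
In the coordinates `h = g + a·𝟏_even + b·𝟏_odd` everything becomes linear algebra over `ℤ`.
Such sequences form a ring because `𝟏_even`, `𝟏_odd` are orthogonal idempotents and the finitely
supported sequences form an ideal of `ℤ^ℕ`; it contains the generators since
`ρ_i ∈ {𝟏_even, 𝟏_odd}`, and the coordinates are read off at large even and odd indices.
In these coordinates `T f = (f, -Σ_{odd} f, -Σ_{even} f)`, which is visibly injective and is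
exactly the kernel of `φ(g, a, b) = (a + Σ_{odd} g, b + Σ_{even} g)`.
-/

noncomputable section

namespace CK19

/-- The checkerboard matrix: `A(i,j) = 1` iff `i + j` is odd. -/
def A (i j : ℕ) : Bool := decide (Odd (i + j))

/-- The `i`-th row of the identity matrix over `ℕ`, as an integer sequence. -/
def delta (i : ℕ) : ℕ → ℤ := fun j => if j = i then 1 else 0

/-- The `i`-th row of the checkerboard matrix, as an integer sequence
(`𝟏_odd` for even `i`, `𝟏_even` for odd `i`). -/
def rho (i : ℕ) : ℕ → ℤ := fun j => if A i j then 1 else 0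

/-- The characteristic function of the even numbers. -/
def oneEven : ℕ → ℤ := fun n => if Even n then 1 else 0

/-- The characteristic function of the odd numbers. -/
def oneOdd : ℕ → ℤ := fun n => if Even n then 0 else 1

/-- `𝔯_A`, the subring of `ℤ^ℕ` generated by the rows of `A` and of the identity matrix. -/
def frakRA : NonUnitalSubring (ℕ → ℤ) :=
  NonUnitalSubring.closure (Set.range rho ∪ Set.range delta)

/-- The sum of `f(n)` over odd `n`. -/
def sumOdd (f : ℕ →₀ ℤ) : ℤ := f.sum fun n v => if Even n then 0 else v

/-- The sum of `f(n)` over even `n`. -/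
def sumEven (f : ℕ →₀ ℤ) : ℤ := f.sum fun n v => if Even n then v else 0

/-- The map `T = (I - Aᵗ) : ⊕_ℕ ℤ → ℤ^ℕ`,
`T f = f - (Σ_{n odd} f(n))·𝟏_even - (Σ_{n even} f(n))·𝟏_odd`. -/
def T (f : ℕ →₀ ℤ) : ℕ → ℤ :=
  fun j => f j - sumOdd f * oneEven j - sumEven f * oneOdd j

theorem coe_single (i : ℕ) (c : ℤ) : ⇑(Finsupp.single i c) = c • delta i := by
  funext j
  simp [Finsupp.single_apply, delta, eq_comm]

theorem rho_of_even {i : ℕ} (hi : Even i) : rho i = oneOdd := by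
  funext j
  rcases Nat.even_or_odd j with hj | hj
  · simp [rho, oneOdd, A, hj, Nat.not_odd_iff_even.mpr (hi.add hj)]
  · simp [rho, oneOdd, A, hi.add_odd hj, Nat.not_even_iff_odd.mpr hj]

theorem rho_of_odd {i : ℕ} (hi : Odd i) : rho i = oneEven := by
  funext j
  rcases Nat.even_or_odd j with hj | hj
  · simp [rho, oneEven, A, hj, hi.add_even hj]
  · simp [rho, oneEven, A, Nat.not_even_iff_odd.mpr hj,
      Nat.not_odd_iff_even.mpr (hi.add_odd hj)]

theorem smul_oneEven_add_smul_oneOdd_mul (a b a' b' : ℤ) :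
    (a • oneEven + b • oneOdd) * (a' • oneEven + b' • oneOdd) =
      (a * a') • oneEven + (b * b') • oneOdd := by
  funext n
  by_cases h : Even n <;> simp [oneEven, oneOdd, h]

def toSeq : (ℕ →₀ ℤ) × ℤ × ℤ →+ (ℕ → ℤ) where
  toFun p := ⇑p.1 + p.2.1 • oneEven + p.2.2 • oneOdd
  map_zero' := by simp
  map_add' p q := by
    simp only [Prod.fst_add, Prod.snd_add, Finsupp.coe_add, add_smul]
    abel

theorem toSeq_apply (g : ℕ →₀ ℤ) (a b : ℤ) : toSeq (g, a, b) = ⇑g + a • oneEven + b • oneOdd :=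
  rfl

theorem toSeq_injective : Function.Injective toSeq := by
  refine (injective_iff_map_eq_zero toSeq).mpr ?_
  rintro ⟨g, a, b⟩ h
  obtain ⟨N, hN⟩ := g.support.exists_nat_subset_range
  have hg : ∀ n ≥ N, g n = 0 := fun n hn =>
    Finsupp.notMem_support_iff.mp fun hmem =>
      (Finset.mem_range.mp (hN hmem)).not_ge hn
  have heven : Even (2 * N) := even_two_mul N
  have hodd : ¬Even (2 * N + 1) := by simp
  have ha := congrFun h (2 * N)
  have hb := congrFun h (2 * N + 1)
  simp only [toSeq_apply, Pi.add_apply, Pi.smul_apply, smul_eq_mul, oneEven, oneOdd,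
    if_pos heven, if_neg hodd, hg (2 * N) (by omega), hg (2 * N + 1) (by omega),
    Pi.zero_apply] at ha hb
  obtain rfl : a = 0 := by simpa using ha
  obtain rfl : b = 0 := by simpa using hb
  have hg0 : (⇑g : ℕ → ℤ) = 0 := by simpa [toSeq_apply] using h
  simp [DFunLike.coe_injective (hg0.trans Finsupp.coe_zero.symm)]

def evenOddSubring : NonUnitalSubring (ℕ → ℤ) where
  toAddSubgroup := toSeq.range
  mul_mem' := by
    rintro _ _ ⟨⟨g, a, b⟩, rfl⟩ ⟨⟨g', a', b'⟩, rfl⟩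
    obtain ⟨p, hp⟩ : ∃ p : ℕ →₀ ℤ, ⇑p = ⇑g * toSeq (g', a', b') :=
      ⟨.ofSupportFinite _ (g.hasFiniteSupport.mul_left _), rfl⟩
    obtain ⟨q, hq⟩ : ∃ q : ℕ →₀ ℤ, ⇑q = ⇑g' * (a • oneEven + b • oneOdd) :=
      ⟨.ofSupportFinite _ (g'.hasFiniteSupport.mul_left _), rfl⟩
    refine ⟨(p + q, a * a', b * b'), Eq.symm ?_⟩
    calc toSeq (g, a, b) * toSeq (g', a', b')
        = ⇑g * toSeq (g', a', b') + ⇑g' * (a • oneEven + b • oneOdd)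
          + (a • oneEven + b • oneOdd) * (a' • oneEven + b' • oneOdd) := by
          simp only [toSeq_apply]; ring
      _ = toSeq (p + q, a * a', b * b') := by
          rw [← hp, ← hq, smul_oneEven_add_smul_oneOdd_mul, toSeq_apply, Finsupp.coe_add,
            add_assoc _ _ ((b * b') • oneOdd)]

theorem mem_evenOddSubring {h : ℕ → ℤ} : h ∈ evenOddSubring ↔ ∃ p, toSeq p = h :=
  Iff.rfl

theorem oneEven_mem_frakRA : oneEven ∈ frakRA :=
  rho_of_odd odd_one ▸ NonUnitalSubring.subset_closure (Or.inl ⟨1, rfl⟩)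

theorem oneOdd_mem_frakRA : oneOdd ∈ frakRA :=
  rho_of_even (i := 0) (by decide) ▸ NonUnitalSubring.subset_closure (Or.inl ⟨0, rfl⟩)

theorem coe_finsupp_mem_frakRA (g : ℕ →₀ ℤ) : ⇑g ∈ frakRA := by
  induction g using Finsupp.induction_linear with
  | zero => exact frakRA.zero_mem
  | add f g hf hg => exact add_mem hf hg
  | single i c =>
    have hdelta : delta i ∈ frakRA := NonUnitalSubring.subset_closure (Or.inr ⟨i, rfl⟩)
    exact coe_single i c ▸ zsmul_mem hdelta c

theorem frakRA_eq_evenOddSubring : frakRA = evenOddSubring := by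
  apply le_antisymm
  · refine NonUnitalSubring.closure_le.mpr ?_
    rintro _ (⟨i, rfl⟩ | ⟨i, rfl⟩)
    · rcases Nat.even_or_odd i with hi | hi
      · exact ⟨(0, 0, 1), by simp [toSeq_apply, rho_of_even hi]⟩
      · exact ⟨(0, 1, 0), by simp [toSeq_apply, rho_of_odd hi]⟩
    · exact ⟨(Finsupp.single i 1, 0, 0), by simp [toSeq_apply, coe_single]⟩
  · rintro _ ⟨⟨g, a, b⟩, rfl⟩
    exact add_mem (add_mem (coe_finsupp_mem_frakRA g) (zsmul_mem oneEven_mem_frakRA a))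
      (zsmul_mem oneOdd_mem_frakRA b)

theorem toSeq_mem_frakRA (p : (ℕ →₀ ℤ) × ℤ × ℤ) : toSeq p ∈ frakRA :=
  frakRA_eq_evenOddSubring ▸ ⟨p, rfl⟩

def coordEquiv : (ℕ →₀ ℤ) × ℤ × ℤ ≃+ frakRA :=
  AddEquiv.ofBijective (toSeq.codRestrict frakRA toSeq_mem_frakRA)
    ⟨fun _ _ h => toSeq_injective (congrArg Subtype.val h), by
      rintro ⟨x, hx⟩
      obtain ⟨p, rfl⟩ := mem_evenOddSubring.mp (frakRA_eq_evenOddSubring ▸ hx)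
      exact ⟨p, rfl⟩⟩

theorem coe_coordEquiv (p : (ℕ →₀ ℤ) × ℤ × ℤ) : (coordEquiv p : ℕ → ℤ) = toSeq p :=
  rfl

theorem sumOdd_add (f g : ℕ →₀ ℤ) : sumOdd (f + g) = sumOdd f + sumOdd g :=
  Finsupp.sum_add_index' (by simp) fun n _ _ => by split_ifs <;> simp

theorem sumEven_add (f g : ℕ →₀ ℤ) : sumEven (f + g) = sumEven f + sumEven g :=
  Finsupp.sum_add_index' (by simp) fun n _ _ => by split_ifs <;> simp

theorem sumOdd_single (i : ℕ) (c : ℤ) :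
    sumOdd (Finsupp.single i c) = if Even i then 0 else c :=
  Finsupp.sum_single_index (by simp)

theorem sumEven_single (i : ℕ) (c : ℤ) :
    sumEven (Finsupp.single i c) = if Even i then c else 0 :=
  Finsupp.sum_single_index (by simp)

theorem T_eq_toSeq (f : ℕ →₀ ℤ) : T f = toSeq (f, -sumOdd f, -sumEven f) := by
  funext j
  simp only [T, toSeq_apply, Pi.add_apply, Pi.smul_apply, smul_eq_mul]
  ring

theorem T_single_one (i : ℕ) : T (Finsupp.single i 1) = delta i - rho i := by
  rw [T_eq_toSeq, toSeq_apply, coe_single, one_smul, sumOdd_single, sumEven_single]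
  rcases Nat.even_or_odd i with hi | hi
  · simp [hi, rho_of_even hi, sub_eq_add_neg]
  · simp [Nat.not_even_iff_odd.mpr hi, rho_of_odd hi, sub_eq_add_neg]

theorem T_injective : Function.Injective T := fun f f' h => by
  rw [T_eq_toSeq, T_eq_toSeq] at h
  exact congrArg Prod.fst (toSeq_injective h)

def indexHom : (ℕ →₀ ℤ) × ℤ × ℤ →+ ℤ × ℤ :=
  AddMonoidHom.mk' (fun p => (p.2.1 + sumOdd p.1, p.2.2 + sumEven p.1)) fun p q => by
    simp only [Prod.fst_add, Prod.snd_add, sumOdd_add, sumEven_add, Prod.mk_add_mk]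
    congr 1 <;> ring

theorem indexHom_apply (g : ℕ →₀ ℤ) (a b : ℤ) :
    indexHom (g, a, b) = (a + sumOdd g, b + sumEven g) :=
  rfl

theorem indexHom_surjective : Function.Surjective indexHom := fun ⟨a, b⟩ =>
  ⟨(0, a, b), by simp [indexHom_apply, sumOdd, sumEven]⟩

theorem indexHom_eq_zero_iff (p : (ℕ →₀ ℤ) × ℤ × ℤ) :
    indexHom p = 0 ↔ p = (p.1, -sumOdd p.1, -sumEven p.1) := by
  obtain ⟨g, a, b⟩ := p
  simp only [indexHom_apply, Prod.mk_eq_zero, Prod.mk.injEq, true_and]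
  constructor <;> rintro ⟨ha, hb⟩ <;> constructor <;> linarith

def phi : frakRA →+ ℤ × ℤ :=
  indexHom.comp coordEquiv.symm.toAddMonoidHom

theorem phi_toSeq (p : (ℕ →₀ ℤ) × ℤ × ℤ) (h : toSeq p ∈ frakRA) :
    phi ⟨toSeq p, h⟩ = indexHom p :=
  congrArg indexHom (coordEquiv.symm_apply_eq.mpr rfl)

theorem phi_surjective : Function.Surjective phi :=
  indexHom_surjective.comp coordEquiv.symm.surjective

theorem phi_eq_zero_iff (x : frakRA) : phi x = 0 ↔ ∃ f : ℕ →₀ ℤ, (x : ℕ → ℤ) = T f := by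
  obtain ⟨p, rfl⟩ := coordEquiv.surjective x
  simp only [phi, AddMonoidHom.comp_apply, AddEquiv.coe_toAddMonoidHom,
    AddEquiv.symm_apply_apply, indexHom_eq_zero_iff, coe_coordEquiv, T_eq_toSeq,
    toSeq_injective.eq_iff]
  exact ⟨fun h => ⟨p.1, h⟩, by rintro ⟨f, rfl⟩; rfl⟩

end CK19

/-- For the checkerboard matrix `A` over `ℕ`: (a) `𝔯_A` consists of the
sequences `g + a·𝟏_even + b·𝟏_odd` with `g` finitely supported, the decomposition being
unique; (b) `T = (I - Aᵗ)` maps into `𝔯_A`, sends `δ_i` to `δ_i - ρ_i`, and is injective;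
(c) `φ(g + a·𝟏_even + b·𝟏_odd) = (a + Σ_{n odd} g(n), b + Σ_{n even} g(n))` is a well-defined
surjective homomorphism `𝔯_A → ℤ × ℤ` with kernel exactly `im T`; consequently
`𝔯_A / im T ≅ ℤ × ℤ` (giving `K₁(𝒪_A) = 0` and `K₀(𝒪_A) = ℤ × ℤ`). -/
theorem stmt_19 :
    -- (a): description of `𝔯_A` and uniqueness of the decomposition
    ((CK19.frakRA : Set (ℕ → ℤ)) =
      {h : ℕ → ℤ | ∃ (g : ℕ →₀ ℤ) (a b : ℤ),
        h = (⇑g : ℕ → ℤ) + a • CK19.oneEven + b • CK19.oneOdd}) ∧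
    (∀ (g g' : ℕ →₀ ℤ) (a b a' b' : ℤ),
      (⇑g : ℕ → ℤ) + a • CK19.oneEven + b • CK19.oneOdd =
        (⇑g' : ℕ → ℤ) + a' • CK19.oneEven + b' • CK19.oneOdd →
      g = g' ∧ a = a' ∧ b = b') ∧
    -- (b): `T` maps into `𝔯_A`, `T δ_i = δ_i - ρ_i`, and `T` is injective
    (∀ f : ℕ →₀ ℤ, CK19.T f ∈ CK19.frakRA) ∧
    (∀ i : ℕ, CK19.T (Finsupp.single i 1) = CK19.delta i - CK19.rho i) ∧
    Function.Injective CK19.T ∧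
    -- (c): the index map `φ` and the computation of the cokernel of `T`
    (∃ φ : CK19.frakRA →+ ℤ × ℤ,
      (∀ (g : ℕ →₀ ℤ) (a b : ℤ)
        (h : ((⇑g : ℕ → ℤ) + a • CK19.oneEven + b • CK19.oneOdd) ∈ CK19.frakRA),
        φ ⟨(⇑g : ℕ → ℤ) + a • CK19.oneEven + b • CK19.oneOdd, h⟩ =
          (a + CK19.sumOdd g, b + CK19.sumEven g)) ∧
      Function.Surjective φ ∧
      (∀ x : CK19.frakRA, φ x = 0 ↔ ∃ f : ℕ →₀ ℤ, (x : ℕ → ℤ) = CK19.T f)) ∧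
    Nonempty ((CK19.frakRA ⧸ AddSubgroup.closure
      {x : CK19.frakRA | ∃ f : ℕ →₀ ℤ, (x : ℕ → ℤ) = CK19.T f}) ≃+ (ℤ × ℤ)) := by
  open CK19 in
  have hT : {x : frakRA | ∃ f : ℕ →₀ ℤ, (x : ℕ → ℤ) = T f} = phi.ker :=
    Set.ext fun x => (phi_eq_zero_iff x).symm
  refine ⟨?_, fun g g' a b a' b' h => ?_, fun f => T_eq_toSeq f ▸ toSeq_mem_frakRA _,
    T_single_one, T_injective, ⟨phi, fun g a b => phi_toSeq (g, a, b), phi_surjective,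
    phi_eq_zero_iff⟩, ?_⟩
  · rw [frakRA_eq_evenOddSubring]
    ext h
    simp [mem_evenOddSubring, toSeq_apply, eq_comm]
  · simpa using toSeq_injective (a₁ := (g, a, b)) (a₂ := (g', a', b')) h
  · rw [hT, AddSubgroup.closure_eq]
    exact ⟨QuotientAddGroup.quotientKerEquivOfSurjective phi phi_surjective⟩
end
end
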